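/- For every integer k ≥ 9, the undirected repetition threshold satisfies URT(k) ≤ RT(⌊k/3⌋). -/

import Mathlib

/-- `x` is a (finite, contiguous) factor of the infinite word `w`. -/
def InfFactor {A : Type*} (x : List A) (w : ℕ → A) : Prop :=
  ∃ i : ℕ, x = (List.range x.length).map fun j => w (i + j)

/-- `z` is an undirected `r`-power: `z = x ++ y ++ x'` with `x` nonempty,
`x' = x` or `x' = x.reverse`, and `|x y x'| / |x y| = r`. -/
def IsUndirectedPow {A : Type*} (r : ℚ) (z : List A) : Prop :=
  ∃ x y x' : List A, z = x ++ y ++ x' ∧ x ≠ [] ∧ (x' = x ∨ x' = x.reverse) ∧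
    (z.length : ℚ) = r * ((x.length : ℚ) + (y.length : ℚ))

/-- `z` is an ordinary `r`-power: `z = x ++ y ++ x` with `x` nonempty and `|x y x| / |x y| = r`. -/
def IsOrdinaryPow {A : Type*} (r : ℚ) (z : List A) : Prop :=
  ∃ x y : List A, z = x ++ y ++ x ∧ x ≠ [] ∧
    (z.length : ℚ) = r * ((x.length : ℚ) + (y.length : ℚ))

/-- The infinite word `w` is undirected `α`-free: no factor of `w` is an undirected
`r`-power with rational `r ≥ α` (where `1 < r ≤ 2`). -/
def UndirectedFree {A : Type*} (α : ℝ) (w : ℕ → A) : Prop :=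
  ∀ z : List A, InfFactor z w →
    ∀ r : ℚ, 1 < r → r ≤ 2 → α ≤ (r : ℝ) → ¬ IsUndirectedPow r z

/-- The infinite word `w` is undirected `α⁺`-free: no factor of `w` is an undirected
`r`-power with rational `r > α` (where `1 < r ≤ 2`). -/
def UndirectedPlusFree {A : Type*} (α : ℝ) (w : ℕ → A) : Prop :=
  ∀ z : List A, InfFactor z w →
    ∀ r : ℚ, 1 < r → r ≤ 2 → α < (r : ℝ) → ¬ IsUndirectedPow r z

/-- The infinite word `w` is (ordinary) `α`-free. -/
def OrdinaryFree {A : Type*} (α : ℝ) (w : ℕ → A) : Prop :=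
  ∀ z : List A, InfFactor z w →
    ∀ r : ℚ, 1 < r → r ≤ 2 → α ≤ (r : ℝ) → ¬ IsOrdinaryPow r z

/-- The infinite word `w` is (ordinary) `α⁺`-free. -/
def OrdinaryPlusFree {A : Type*} (α : ℝ) (w : ℕ → A) : Prop :=
  ∀ z : List A, InfFactor z w →
    ∀ r : ℚ, 1 < r → r ≤ 2 → α < (r : ℝ) → ¬ IsOrdinaryPow r z

/-- The undirected repetition threshold for `k` letters: the infimum of the set of
rationals `r ∈ (1, 2]` such that undirected `r`-powers are `k`-avoidable. -/
noncomputable def URT (k : ℕ) : ℝ :=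
  sInf {a : ℝ | ∃ r : ℚ, a = (r : ℝ) ∧ 1 < r ∧ r ≤ 2 ∧
    ∃ w : ℕ → Fin k, UndirectedFree (r : ℝ) w}

/-- The (ordinary) repetition threshold for `k` letters. -/
noncomputable def RT (k : ℕ) : ℝ :=
  sInf {a : ℝ | ∃ r : ℚ, a = (r : ℝ) ∧ 1 < r ∧ r ≤ 2 ∧
    ∃ w : ℕ → Fin k, OrdinaryFree (r : ℝ) w}

/-!
Let `m = ⌊k/3⌋ ≥ 3`. Tagging each letter of an ordinary `r`-free word over `m` letters with its
position mod 3 gives a word over `3m ≤ k` letters that is undirected `r`-free: an ordinary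
repetition in it projects to one in the original word, and a reversed one is ruled out by the
tags. So the set defining `RT(m)` is contained in the set defining `URT(k)`. It is nonempty
because coding consecutive pairs of letters of the overlap-free Thue–Morse word gives a ternary
square-free, i.e. ordinary `2`-free, word.
-/

theorem infFactor_iff {A : Type*} {z : List A} {w : ℕ → A} :
    InfFactor z w ↔ ∃ i, ∀ j (hj : j < z.length), z[j] = w (i + j) := by
  refine exists_congr fun i => ⟨fun h j hj => ?_, fun h => List.ext_getElem (by simp) ?_⟩
  · rw [List.getElem_of_eq h hj]; simp
  · intro j hj _; simp [h j hj]

theorem InfFactor.map {A B : Type*} {z : List A} {w : ℕ → A} (hz : InfFactor z w) (f : A → B) :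
    InfFactor (z.map f) (f ∘ w) := by
  obtain ⟨i, hi⟩ := infFactor_iff.mp hz
  exact infFactor_iff.mpr ⟨i, fun j hj => by simp [hi]⟩

theorem IsOrdinaryPow.map {A B : Type*} {r : ℚ} {z : List A} (hz : IsOrdinaryPow r z)
    (f : A → B) : IsOrdinaryPow r (z.map f) := by
  obtain ⟨x, y, rfl, hx, hlen⟩ := hz
  exact ⟨x.map f, y.map f, by simp, by simpa using hx, by simpa using hlen⟩

theorem IsUndirectedPow.isOrdinaryPow_or_reverse {A : Type*} {r : ℚ} {z : List A}
    (hz : IsUndirectedPow r z) :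
    IsOrdinaryPow r z ∨ ∃ x y : List A, z = x ++ y ++ x.reverse ∧ 2 ≤ x.length := by
  obtain ⟨x, y, x', rfl, hx, rfl | rfl, hlen⟩ := hz
  · exact .inl ⟨_, y, rfl, hx, hlen⟩
  rcases Nat.lt_or_ge x.length 2 with h | h
  · obtain ⟨a, rfl⟩ : ∃ a, x = [a] :=
      List.length_eq_one_iff.mp (by have := List.length_pos_iff.mpr hx; omega)
    exact .inl ⟨[a], y, rfl, hx, hlen⟩
  · exact .inr ⟨x, y, rfl, h⟩

def SquareFreeWord {A : Type*} (w : ℕ → A) : Prop :=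
  ∀ i p, 0 < p → ¬ ∀ j < p, w (i + j) = w (i + p + j)

theorem SquareFreeWord.comp_injective {A B : Type*} {w : ℕ → A} (hw : SquareFreeWord w)
    {f : A → B} (hf : Function.Injective f) : SquareFreeWord (f ∘ w) :=
  fun i p hp h => hw i p hp fun j hj => hf (h j hj)

theorem SquareFreeWord.ordinaryFree_two {A : Type*} {w : ℕ → A} (hw : SquareFreeWord w) :
    OrdinaryFree 2 w := by
  rintro z hz r - hr2 h2r ⟨x, y, rfl, hx, hlen⟩
  obtain rfl : r = 2 := le_antisymm hr2 (by exact_mod_cast h2r)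
  obtain rfl : y = [] := by
    simp only [List.length_append, Nat.cast_add] at hlen
    exact List.length_eq_zero_iff.mp (by exact_mod_cast (by linarith : (y.length : ℚ) = 0))
  obtain ⟨i, hi⟩ := infFactor_iff.mp hz
  refine hw i x.length (List.length_pos_iff.mpr hx) fun j hj => ?_
  have h1 := hi j (by simp; omega)
  have h2 := hi (x.length + j) (by simp; omega)
  simp only [List.append_nil, List.getElem_append_left hj] at h1 h2
  rw [← h1, add_assoc, ← h2, List.getElem_append_right (by omega)]
  simp

def thueMorse : ℕ → Bool
  | 0 => false
  | n + 1 => xor (thueMorse ((n + 1) / 2)) ((n + 1) % 2 == 1)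

def OverlapFreeWord {A : Type*} (w : ℕ → A) : Prop :=
  ∀ i p, 0 < p → ¬ ∀ j ≤ p, w (i + j) = w (i + p + j)

namespace thueMorse

theorem eq_xor (n : ℕ) : thueMorse n = xor (thueMorse (n / 2)) (n % 2 == 1) := by
  cases n <;> simp [thueMorse]

theorem two_mul (n : ℕ) : thueMorse (2 * n) = thueMorse n := by
  rw [eq_xor]; simp

theorem two_mul_add_one (n : ℕ) : thueMorse (2 * n + 1) = !thueMorse n := by
  rw [eq_xor, show (2 * n + 1) / 2 = n by omega, show (2 * n + 1) % 2 = 1 by omega]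
  simp

theorem ne_or_ne (n : ℕ) :
    thueMorse n ≠ thueMorse (n + 1) ∨ thueMorse (n + 1) ≠ thueMorse (n + 2) := by
  obtain ⟨m, rfl | rfl⟩ := Nat.even_or_odd' n
  · left; simp [two_mul, two_mul_add_one]
  · right
    rw [show 2 * m + 1 + 1 = 2 * (m + 1) by ring, show 2 * m + 1 + 2 = 2 * (m + 1) + 1 by ring]
    simp [two_mul, two_mul_add_one]

theorem overlap_half {i q : ℕ}
    (h : ∀ j ≤ 2 * q, thueMorse (i + j) = thueMorse (i + 2 * q + j)) :
    ∀ j ≤ q, thueMorse (i / 2 + j) = thueMorse (i / 2 + q + j) := by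
  intro j hj
  have h2j := h (2 * j) (by omega)
  rw [eq_xor (i + 2 * j), eq_xor (i + 2 * q + 2 * j), show (i + 2 * j) / 2 = i / 2 + j by omega,
    show (i + 2 * q + 2 * j) / 2 = i / 2 + q + j by omega,
    show (i + 2 * q + 2 * j) % 2 = (i + 2 * j) % 2 by omega] at h2j
  exact (Bool.xor_left_inj).mp h2j

/-- An odd period `2s + 1` matches each two-letter block `2m, 2m + 1` against letters straddling
two blocks, giving `thueMorse (m + s) = !thueMorse m = thueMorse (m + s + 1)` for two
consecutive `m`. -/
theorem not_overlap_odd {i s : ℕ} (hs : 0 < s)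
    (h : ∀ j ≤ 2 * s + 1, thueMorse (i + j) = thueMorse (i + (2 * s + 1) + j)) : False := by
  have even_start : ∀ m, i ≤ 2 * m → 2 * m ≤ i + (2 * s + 1) →
      thueMorse (m + s) = !thueMorse m := by
    intro m h1 h2
    have := h (2 * m - i) (by omega)
    rw [show i + (2 * m - i) = 2 * m by omega,
      show i + (2 * s + 1) + (2 * m - i) = 2 * (m + s) + 1 by omega,
      two_mul, two_mul_add_one] at this
    rw [this, Bool.not_not]
  have odd_start : ∀ m, i ≤ 2 * m + 1 → 2 * m + 1 ≤ i + (2 * s + 1) →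
      thueMorse (m + s + 1) = !thueMorse m := by
    intro m h1 h2
    have := h (2 * m + 1 - i) (by omega)
    rwa [show i + (2 * m + 1 - i) = 2 * m + 1 by omega,
      show i + (2 * s + 1) + (2 * m + 1 - i) = 2 * (m + s + 1) by omega,
      two_mul, two_mul_add_one, eq_comm] at this
  obtain ⟨a, rfl | rfl⟩ := Nat.even_or_odd' i
  · have e1 := even_start a (by omega) (by omega)
    have e2 := odd_start a (by omega) (by omega)
    have e3 := even_start (a + 1) (by omega) (by omega)
    have e4 := odd_start (a + 1) (by omega) (by omega)
    rcases ne_or_ne (a + s) with h | h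
    · exact h (e1.trans e2.symm)
    · exact h (by rw [← add_right_comm, e3, show a + s + 2 = a + 1 + s + 1 by ring, e4])
  · have e1 := odd_start a (by omega) (by omega)
    have e2 := even_start (a + 1) (by omega) (by omega)
    have e3 := odd_start (a + 1) (by omega) (by omega)
    have e4 := even_start (a + 2) (by omega) (by omega)
    rcases ne_or_ne a with h | h
    · exact h (by rw [← Bool.not_inj_iff, ← e1, ← e2, add_right_comm])
    · exact h (by rw [← Bool.not_inj_iff, ← e3, ← e4, add_right_comm])

end thueMorse

theorem overlapFreeWord_thueMorse : OverlapFreeWord thueMorse := by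
  intro i p hp h
  induction p using Nat.strong_induction_on generalizing i with
  | _ p ih =>
  obtain ⟨s, rfl | rfl⟩ := Nat.even_or_odd' p
  · exact ih s (by omega) (i / 2) (by omega) (thueMorse.overlap_half h)
  · rcases Nat.eq_zero_or_pos s with rfl | hs
    · rcases thueMorse.ne_or_ne i with hne | hne
      · exact hne (h 0 (by omega))
      · exact hne (h 1 (by omega))
    · exact thueMorse.not_overlap_odd hs h

/-- Codes a pair of consecutive Thue–Morse letters, identifying `00` with `11`. -/
def thueLetter (a b : Bool) : Fin 3 := if a = b then 0 else if a then 2 else 1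

def thueWord (n : ℕ) : Fin 3 := thueLetter (thueMorse n) (thueMorse (n + 1))

theorem thueLetter_eq {a b a' b' : Bool} (h : thueLetter a b = thueLetter a' b') :
    xor a a' = xor b b' ∧ (a ≠ a' → a = b) := by
  revert a b a' b'; decide

theorem squareFreeWord_thueWord : SquareFreeWord thueWord := by
  intro i p hp h
  have hxor : ∀ j ≤ p, xor (thueMorse (i + j)) (thueMorse (i + p + j)) =
      xor (thueMorse i) (thueMorse (i + p)) := by
    intro j hj
    induction j with
    | zero => rfl
    | succ j ih => rw [← ih (by omega)]; exact (thueLetter_eq (h j (by omega))).1.symm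
  cases hc : xor (thueMorse i) (thueMorse (i + p))
  · refine overlapFreeWord_thueMorse i p hp fun j hj => ?_
    simpa [hc] using hxor j hj
  · have hne : ∀ j ≤ p, thueMorse (i + j) ≠ thueMorse (i + p + j) := fun j hj => by
      simpa [hc] using hxor j hj
    have hconst : ∀ j < p, thueMorse (i + j) = thueMorse (i + j + 1) := fun j hj =>
      (thueLetter_eq (h j hj)).2 (hne j hj.le)
    rcases Nat.lt_or_ge p 2 with hp1 | hp2
    · obtain rfl : p = 1 := by omega
      exact hne 0 (by omega) (hconst 0 (by omega))
    · rcases thueMorse.ne_or_ne i with h' | h'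
      · exact h' (hconst 0 (by omega))
      · exact h' (hconst 1 (by omega))

/-- The first two letters of `x.reverse` are the last two of `x`, so an occurrence of
`x y x.reverse` forces `|y| + 1 ≡ 0` and `|y| + 3 ≡ 0` mod 3. -/
theorem not_infFactor_append_reverse {A : Type*} {w : ℕ → A}
    (hw : ∀ a b, w a = w b → a % 3 = b % 3) {x y : List A} (hx : 2 ≤ x.length) :
    ¬ InfFactor (x ++ y ++ x.reverse) w := by
  rw [infFactor_iff]
  rintro ⟨i, hi⟩
  have mirror : ∀ j < 2, w (i + (x.length + y.length + j)) = w (i + (x.length - 1 - j)) := by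
    intro j hj
    rw [← hi _ (by simp; omega), ← hi _ (by simp; omega), List.getElem_append_right (by simp),
      List.getElem_append_left (by simp; omega), List.getElem_append_left (by omega)]
    simp
  have h0 := hw _ _ (mirror 0 (by omega))
  have h1 := hw _ _ (mirror 1 (by omega))
  omega

theorem UndirectedFree.of_ordinaryFree_comp {A B : Type*} {α : ℝ} {w : ℕ → B} (π : B → A)
    (hπ : OrdinaryFree α (π ∘ w)) (hw : ∀ a b, w a = w b → a % 3 = b % 3) :
    UndirectedFree α w := by
  intro z hz r hr1 hr2 hαr hpow
  rcases hpow.isOrdinaryPow_or_reverse with hord | ⟨x, y, rfl, hx⟩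
  · exact hπ _ (hz.map π) r hr1 hr2 hαr (hord.map π)
  · exact not_infFactor_append_reverse hw hx hz

def markMod3 {m k : ℕ} (w : ℕ → Fin m) (hmk : 3 * m ≤ k) (n : ℕ) : Fin k :=
  ⟨3 * w n + n % 3, by have := (w n).isLt; omega⟩

theorem OrdinaryFree.undirectedFree_markMod3 {m k : ℕ} {α : ℝ} {w : ℕ → Fin m}
    (hw : OrdinaryFree α w) (hmk : 3 * m ≤ k) : UndirectedFree α (markMod3 w hmk) := by
  refine .of_ordinaryFree_comp
    (fun c : Fin k => (⟨c / 3 % m, Nat.mod_lt _ (w 0).pos⟩ : Fin m)) ?_ ?_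
  · convert hw
    ext n
    simp only [Function.comp_apply, markMod3]
    have := (w n).isLt
    rw [show (3 * (w n : ℕ) + n % 3) / 3 = w n by omega, Nat.mod_eq_of_lt this]
  · intro a b hab
    have := congrArg Fin.val hab
    simp only [markMod3] at this
    omega

theorem URT_le_RT_floor_third (k : ℕ) (hk : 9 ≤ k) : URT k ≤ RT (k / 3) := by
  have hm : 3 ≤ k / 3 := by omega
  apply csInf_le_csInf
  · exact ⟨1, by rintro _ ⟨r, rfl, hr, -⟩; exact_mod_cast hr.le⟩
  · refine ⟨2, 2, by norm_num, by norm_num, le_rfl, Fin.castLE hm ∘ thueWord, ?_⟩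
    exact_mod_cast
      (squareFreeWord_thueWord.comp_injective (Fin.castLE_injective hm)).ordinaryFree_two
  · rintro _ ⟨r, rfl, hr1, hr2, w, hw⟩
    exact ⟨r, rfl, hr1, hr2, _, hw.undirectedFree_markMod3 (by omega)⟩
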